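/- arXiv:2308.06258 — 4 statements merged into one kernel-verified Lean document; each statement's English description precedes it below -/
import Mathlib

section
/- For affine functions λ1, λ2, λ3 on R^4, the matrix field λ1 (∇λ2⊗∇λ3 − ∇λ3⊗∇λ2) + λ2 (∇λ3⊗∇λ1 − ∇λ1⊗∇λ3) + λ3 (∇λ1⊗∇λ2 − ∇λ2⊗∇λ1) decomposes as A + C(x), where A is a constant skew-symmetric matrix and C(x) is a skew-symmetric matrix with entries homogeneous linear in x satisfying C(x)x = 0. -/
open Matrix

/-- For affine functions `λ_i(x) = η_i + β_i · x` on `ℝ⁴` (with gradients `β_i`),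
the matrix field
`λ1 (∇λ2⊗∇λ3 − ∇λ3⊗∇λ2) + λ2 (∇λ3⊗∇λ1 − ∇λ1⊗∇λ3) + λ3 (∇λ1⊗∇λ2 − ∇λ2⊗∇λ1)`
decomposes as `A + C(x)` with `A` a constant skew-symmetric matrix and `C` a
skew-symmetric matrix field with entries homogeneous linear in `x` (i.e. `C` is
linear) satisfying `C(x) x = 0`. -/
theorem matrix_field_decomposition (η1 η2 η3 : ℝ) (β1 β2 β3 : Fin 4 → ℝ)
    (lam1 lam2 lam3 : (Fin 4 → ℝ) → ℝ)
    (hlam1 : ∀ x, lam1 x = η1 + β1 ⬝ᵥ x)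
    (hlam2 : ∀ x, lam2 x = η2 + β2 ⬝ᵥ x)
    (hlam3 : ∀ x, lam3 x = η3 + β3 ⬝ᵥ x)
    (M : (Fin 4 → ℝ) → Matrix (Fin 4) (Fin 4) ℝ)
    (hM : ∀ x i j, M x i j =
      lam1 x * (β2 i * β3 j - β3 i * β2 j) +
      lam2 x * (β3 i * β1 j - β1 i * β3 j) +
      lam3 x * (β1 i * β2 j - β2 i * β1 j)) :
    ∃ (A : Matrix (Fin 4) (Fin 4) ℝ)
      (C : (Fin 4 → ℝ) →ₗ[ℝ] Matrix (Fin 4) (Fin 4) ℝ),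
      Aᵀ = -A ∧
      (∀ x, (C x)ᵀ = -(C x)) ∧
      (∀ x, (C x).mulVec x = 0) ∧
      (∀ x, M x = A + C x) := by
  refine ⟨Matrix.of fun i j =>
      η1 * (β2 i * β3 j - β3 i * β2 j) +
      η2 * (β3 i * β1 j - β1 i * β3 j) +
      η3 * (β1 i * β2 j - β2 i * β1 j),
    { toFun := fun x => Matrix.of fun i j =>
        (β1 ⬝ᵥ x) * (β2 i * β3 j - β3 i * β2 j) +
        (β2 ⬝ᵥ x) * (β3 i * β1 j - β1 i * β3 j) +
        (β3 ⬝ᵥ x) * (β1 i * β2 j - β2 i * β1 j),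
      map_add' := by
        intro x y
        ext i j
        simp [dotProduct_add]
        ring
      map_smul' := by
        intro c x
        ext i j
        simp [dotProduct_smul, smul_eq_mul]
        ring },
    ?_, ?_, ?_, ?_⟩
  · ext i j
    simp [Matrix.transpose_apply]
    ring
  · intro x
    ext i j
    simp [Matrix.transpose_apply]
    ring
  · intro x
    funext i
    simp only [Matrix.mulVec, dotProduct, LinearMap.coe_mk, AddHom.coe_mk,
      Matrix.of_apply, Fin.sum_univ_four, Pi.zero_apply]
    ring
  · intro x
    ext i j
    simp only [Matrix.add_apply, LinearMap.coe_mk, AddHom.coe_mk, Matrix.of_apply,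
      hM, hlam1, hlam2, hlam3]
    ring
end

section
/- For polynomials p1, p2, p3, p4 (homogeneous of degree k−1) in four variables, the matrix equation C(x)·(p1,p2,p3,p4)^T = 0, where C(x) is the 6×4 matrix with rows (0,0,x4,−x3), (0,−x4,0,x2), (0,x3,−x2,0), (x4,0,0,−x1), (−x3,0,x1,0), (x2,−x1,0,0), holds if and only if there exists a polynomial q (homogeneous of degree k−2) with p_i = x_i q for i = 1,2,3,4. -/
open MvPolynomial

namespace MvPolynomial

variable {σ R : Type*}

theorem IsHomogeneous.of_X_mul [CommSemiring R] {i : σ} {q : MvPolynomial σ R} {m : ℕ}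
    (h : (X i * q).IsHomogeneous m) : q.IsHomogeneous (m - 1) := by
  intro d hd
  have hdeg : (Finsupp.single i 1 + d).degree = m := by
    by_contra hne
    exact hd (by rw [← coeff_X_mul]; exact h.coeff_eq_zero hne)
  rw [map_add, Finsupp.degree_single] at hdeg
  rw [Pi.one_def, ← Finsupp.degree_eq_weight_one]
  omega

/-- `X j` is prime and does not divide `X i`, so `X j * p i = X i * p j` forces `X j ∣ p j`. -/
theorem exists_eq_X_mul_of_X_mul_comm [CommRing R] [IsDomain R]
    {p : σ → MvPolynomial σ R} {i j : σ} (hij : i ≠ j) (h : ∀ l, X j * p l = X l * p j) :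
    ∃ q, ∀ l, p l = X l * q := by
  have hXj : ¬ (X j : MvPolynomial σ R) ∣ X i := by
    rw [X_dvd_X]
    exact hij.symm
  have hdvd : X j ∣ X i * p j := Dvd.intro _ (h i)
  obtain ⟨q, hq⟩ := (X_prime.dvd_or_dvd hdvd).resolve_left hXj
  refine ⟨q, fun l => ?_⟩
  rw [← X_mul_cancel_left_iff (i := j), h l, hq, mul_left_comm]

end MvPolynomial

/-- For homogeneous polynomials `p₁,…,p₄` of degree `k−1` in four variables,
`C(x)·(p₁,p₂,p₃,p₄)ᵀ = 0` (with the explicit 6×4 matrix `C(x)` of linear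
entries) holds iff there is a homogeneous polynomial `q` of degree `k−2` with
`p_i = x_i q` for every `i`. -/
theorem kernel_characterization (k : ℕ) (p : Fin 4 → MvPolynomial (Fin 4) ℝ)
    (hp : ∀ i, p i ∈ homogeneousSubmodule (Fin 4) ℝ (k - 1)) :
    (X 3 * p 2 - X 2 * p 3 = 0 ∧
     -(X 3) * p 1 + X 1 * p 3 = 0 ∧
     X 2 * p 1 - X 1 * p 2 = 0 ∧
     X 3 * p 0 - X 0 * p 3 = 0 ∧
     -(X 2) * p 0 + X 0 * p 2 = 0 ∧
     X 1 * p 0 - X 0 * p 1 = 0) ↔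
    (∃ q : MvPolynomial (Fin 4) ℝ,
      q ∈ homogeneousSubmodule (Fin 4) ℝ (k - 2) ∧ ∀ i, p i = X i * q) := by
  constructor
  · rintro ⟨h23, h13, -, h03, -, -⟩
    have hcomm : ∀ l, X 3 * p l = X l * p 3 := by
      intro l
      fin_cases l <;> simp only [Fin.reduceFinMk, Fin.isValue]
      · linear_combination h03
      · linear_combination -h13
      · linear_combination h23
    obtain ⟨q, hq⟩ := exists_eq_X_mul_of_X_mul_comm (by decide : (0 : Fin 4) ≠ 3) hcomm
    refine ⟨q, ?_, hq⟩
    have hp3 := (mem_homogeneousSubmodule _ _).mp (hp 3)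
    rw [hq 3] at hp3
    simpa [mem_homogeneousSubmodule, Nat.sub_sub] using hp3.of_X_mul
  · rintro ⟨q, -, hq⟩
    simp only [hq]
    refine ⟨?_, ?_, ?_, ?_, ?_, ?_⟩ <;> ring
end

section
/- The dimension of the space V = (P^{k−1})^4 ⊕ { p ∈ (P̃^k)^4 : p·x = 0 } of polynomial 1-forms on the pentatope equals k(k+2)(k+3)(k+4)/6, where P^m and P̃^m denote polynomials of degree ≤ m and homogeneous polynomials of degree m in four variables, respectively. -/
/-!
Since the `aᵢ` have degree `< k` and the `bᵢ` are homogeneous of degree `k`, the sum is direct and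
`dim V = 4 dim P^{k-1} + dim ker κ` for the Koszul map `κ : (P̃^k)⁴ → P̃^{k+1}`, `κ b = b · x`.
It is onto because `P̃^{k+1} = P̃^k · span {xᵢ}`, so `dim ker κ = 4 dim P̃^k - dim P̃^{k+1}`.
Counting monomials in `n` variables, `dim P̃^m = multichoose n m` and
`dim P^m = multichoose (n + 1) m`, and the formula becomes a polynomial identity in `k`.
-/

open MvPolynomial Finset

theorem Nat.factorial_mul_succ_multichoose (n k : ℕ) :
    n.factorial * (n + 1).multichoose k = (k + 1).ascFactorial n := by
  rw [Nat.multichoose_eq, add_right_comm n 1 k, Nat.add_sub_cancel, ← Nat.choose_symm_add,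
    add_comm n k, Nat.ascFactorial_eq_factorial_mul_choose]

namespace Submodule

variable {ι R : Type*} {φ : ι → Type*}

def piUnivEquiv [Semiring R] [∀ i, AddCommMonoid (φ i)] [∀ i, Module R (φ i)]
    (p : ∀ i, Submodule R (φ i)) : (∀ i, p i) ≃ₗ[R] pi Set.univ p where
  toFun f := ⟨fun i => f i, fun i _ => (f i).2⟩
  invFun g i := ⟨g.1 i, g.2 i (Set.mem_univ i)⟩
  map_add' _ _ := rfl
  map_smul' _ _ := rfl

instance [Semiring R] [∀ i, AddCommMonoid (φ i)] [∀ i, Module R (φ i)] [Finite ι]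
    (p : ∀ i, Submodule R (φ i)) [∀ i, Module.Finite R (p i)] : Module.Finite R (pi Set.univ p) :=
  Module.Finite.equiv (piUnivEquiv p)

theorem finrank_pi_univ [Ring R] [StrongRankCondition R] [∀ i, AddCommGroup (φ i)]
    [∀ i, Module R (φ i)] [Fintype ι] (p : ∀ i, Submodule R (φ i)) [∀ i, Module.Free R (p i)]
    [∀ i, Module.Finite R (p i)] :
    Module.finrank R (pi Set.univ p) = ∑ i, Module.finrank R (p i) := by
  rw [← (piUnivEquiv p).finrank_eq, Module.finrank_pi_fintype]

theorem disjoint_pi_univ [Semiring R] [∀ i, AddCommMonoid (φ i)] [∀ i, Module R (φ i)]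
    {p q : ∀ i, Submodule R (φ i)} (h : ∀ i, Disjoint (p i) (q i)) :
    Disjoint (pi Set.univ p) (pi Set.univ q) :=
  disjoint_def.mpr fun _ hp hq => funext fun i =>
    disjoint_def.mp (h i) _ (hp i (Set.mem_univ i)) (hq i (Set.mem_univ i))

end Submodule

namespace MvPolynomial

section Degree

variable {σ R : Type*} [CommSemiring R]

instance [Finite σ] (m : ℕ) : Module.Finite R (homogeneousSubmodule σ R m) :=
  Module.Finite.iff_fg.mpr (homogeneousSubmodule_fg σ R m)

theorem homogeneousSubmodule_succ (m : ℕ) :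
    homogeneousSubmodule σ R (m + 1) = ⨆ i, homogeneousSubmodule σ R m * (R ∙ X i) := by
  rw [← homogeneousSubmodule_one_pow, pow_succ, homogeneousSubmodule_one_pow,
    homogeneousSubmodule_one_eq_span_X, Submodule.span_range_eq_iSup, Submodule.mul_iSup]

theorem disjoint_restrictTotalDegree_homogeneousSubmodule {m n : ℕ} (h : m < n) :
    Disjoint (restrictTotalDegree σ R m) (homogeneousSubmodule σ R n) := by
  refine Submodule.disjoint_def.mpr fun p hm hn => ?_
  by_contra hp
  have hdeg := (mem_restrictTotalDegree σ m p).mp hm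
  rw [((mem_homogeneousSubmodule n p).mp hn).totalDegree hp] at hdeg
  omega

theorem setOf_degree_eq_eq_finsuppAntidiag [Fintype σ] [DecidableEq σ] (m : ℕ) :
    {d : σ →₀ ℕ | d.degree = m} = ↑(univ.finsuppAntidiag m : Finset (σ →₀ ℕ)) := by
  ext d
  simp [mem_finsuppAntidiag, Finsupp.degree_eq_sum]

theorem setOf_degree_le_eq_biUnion_finsuppAntidiag [Fintype σ] [DecidableEq σ] (m : ℕ) :
    {d : σ →₀ ℕ | d.degree ≤ m} =
      ↑((range (m + 1)).biUnion fun j => (univ.finsuppAntidiag j : Finset (σ →₀ ℕ))) := by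
  ext d
  simp [mem_finsuppAntidiag, Finsupp.degree_eq_sum]

variable (K : Type*) [Field K]

theorem finrank_restrictSupport_coe (s : Finset (σ →₀ ℕ)) :
    Module.finrank K (restrictSupport K (s : Set (σ →₀ ℕ))) = #s := by
  rw [Module.finrank_eq_card_basis (basisRestrictSupport K _)]
  exact Fintype.card_coe s

variable [Fintype σ]

theorem finrank_homogeneousSubmodule (m : ℕ) :
    Module.finrank K (homogeneousSubmodule σ K m) = (Fintype.card σ).multichoose m := by
  classical
  rw [homogeneousSubmodule_eq_finsupp_supported, setOf_degree_eq_eq_finsuppAntidiag,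
    ← restrictSupport, finrank_restrictSupport_coe, card_finsuppAntidiag_nat_eq_multichoose,
    card_univ]

theorem finrank_restrictTotalDegree (m : ℕ) :
    Module.finrank K (restrictTotalDegree σ K m) = (Fintype.card σ + 1).multichoose m := by
  classical
  have hdisj : ((range (m + 1) : Set ℕ)).PairwiseDisjoint
      fun j => (univ.finsuppAntidiag j : Finset (σ →₀ ℕ)) := by
    intro i _ j _ hij
    rw [Function.onFun, Finset.disjoint_left]
    exact fun d hi hj =>
      hij ((mem_finsuppAntidiag.mp hi).1.symm.trans (mem_finsuppAntidiag.mp hj).1)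
  change Module.finrank K (restrictSupport K {d : σ →₀ ℕ | d.degree ≤ m}) = _
  rw [setOf_degree_le_eq_biUnion_finsuppAntidiag, finrank_restrictSupport_coe, card_biUnion hdisj]
  simp_rw [card_finsuppAntidiag_nat_eq_multichoose, card_univ]
  rw [Nat.sum_range_multichoose, Nat.multichoose_eq, add_right_comm _ 1 m, Nat.add_sub_cancel,
    ← Nat.choose_symm_add, add_comm m]

end Degree

section Koszul

variable {σ R : Type*} [Fintype σ] [CommSemiring R]

noncomputable def koszul : (σ → MvPolynomial σ R) →ₗ[R] MvPolynomial σ R :=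
  (Fintype.linearCombination (MvPolynomial σ R) X).restrictScalars R

theorem koszul_apply (b : σ → MvPolynomial σ R) : koszul b = ∑ i, b i * X i := by
  simp [koszul, Fintype.linearCombination_apply]

theorem koszul_comp_single [DecidableEq σ] (i : σ) :
    koszul ∘ₗ LinearMap.single R _ i = LinearMap.mulRight R (X i : MvPolynomial σ R) :=
  LinearMap.ext fun _ => by simp [koszul, Fintype.linearCombination_apply_single]

theorem map_koszul_pi_homogeneousSubmodule (m : ℕ) :
    (Submodule.pi Set.univ fun _ : σ => homogeneousSubmodule σ R m).map koszul =
      homogeneousSubmodule σ R (m + 1) := by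
  classical
  rw [← Submodule.iSup_map_single, Submodule.map_iSup, homogeneousSubmodule_succ]
  refine iSup_congr fun i => Submodule.ext fun p => ?_
  rw [← Submodule.map_comp, koszul_comp_single, Submodule.mem_mul_span_singleton]
  rfl

theorem finrank_pi_homogeneousSubmodule_inf_ker_koszul_add (K : Type*) [Field K] (m : ℕ) :
    Module.finrank K
        ↥(Submodule.pi Set.univ (fun _ : σ => homogeneousSubmodule σ K m) ⊓ LinearMap.ker koszul) +
      (Fintype.card σ).multichoose (m + 1) = Fintype.card σ * (Fintype.card σ).multichoose m := by
  set H := Submodule.pi Set.univ fun _ : σ => homogeneousSubmodule σ K m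
  have rank_nullity := LinearMap.finrank_range_add_finrank_ker (koszul.domRestrict H)
  rw [LinearMap.range_domRestrict, map_koszul_pi_homogeneousSubmodule,
    finrank_homogeneousSubmodule, LinearMap.ker_domRestrict, ← Submodule.finrank_map_subtype_eq,
    Submodule.map_comap_subtype, Submodule.finrank_pi_univ] at rank_nullity
  simp only [finrank_homogeneousSubmodule, sum_const, card_univ, smul_eq_mul] at rank_nullity
  omega

end Koszul

end MvPolynomial

/-- The space `V = (P^{k−1})⁴ ⊕ { p ∈ (P̃^k)⁴ : p·x = 0 }` of polynomial 1-forms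
on the pentatope has dimension `k(k+2)(k+3)(k+4)/6`. -/
theorem dim_one_forms_pentatope (k : ℕ) (hk : 1 ≤ k) :
    ∃ S : Submodule ℝ (Fin 4 → MvPolynomial (Fin 4) ℝ),
      (∀ p, p ∈ S ↔ ∃ a b : Fin 4 → MvPolynomial (Fin 4) ℝ,
        (∀ i, (a i).totalDegree ≤ k - 1) ∧
        (∀ i, b i ∈ homogeneousSubmodule (Fin 4) ℝ k) ∧
        (∑ i, b i * X i) = 0 ∧ p = a + b) ∧
      Module.finrank ℝ S = k * (k + 2) * (k + 3) * (k + 4) / 6 := by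
  obtain ⟨j, rfl⟩ := Nat.exists_eq_add_of_le' hk
  set A := Submodule.pi Set.univ fun _ : Fin 4 => restrictTotalDegree (Fin 4) ℝ j
  set B := Submodule.pi Set.univ (fun _ : Fin 4 => homogeneousSubmodule (Fin 4) ℝ (j + 1)) ⊓
    LinearMap.ker koszul
  refine ⟨A ⊔ B, fun p => ?_, ?_⟩
  · simp only [A, B, Submodule.mem_sup, Submodule.mem_inf, Submodule.mem_pi, Set.mem_univ,
      forall_const, mem_restrictTotalDegree, LinearMap.mem_ker, koszul_apply, add_tsub_cancel_right]
    exact ⟨fun ⟨a, ha, b, ⟨hb, hb0⟩, hp⟩ => ⟨a, b, ha, hb, hb0, hp.symm⟩,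
      fun ⟨a, b, ha, hb, hb0, hp⟩ => ⟨a, ha, b, ⟨hb, hb0⟩, hp.symm⟩⟩
  have hAB : Disjoint A B := (Submodule.disjoint_pi_univ fun _ =>
    disjoint_restrictTotalDegree_homogeneousSubmodule j.lt_succ_self).mono_right inf_le_left
  have hsup := Submodule.finrank_sup_add_finrank_inf_eq A B
  rw [hAB.eq_bot, finrank_bot, add_zero] at hsup
  have hA : Module.finrank ℝ A = 4 * (5 : ℕ).multichoose j := by
    simp [A, Submodule.finrank_pi_univ, finrank_restrictTotalDegree]
  have hB : Module.finrank ℝ B + (4 : ℕ).multichoose (j + 2) = 4 * (4 : ℕ).multichoose (j + 1) := by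
    simpa using finrank_pi_homogeneousSubmodule_inf_ker_koszul_add (σ := Fin 4) ℝ (j + 1)
  have hA' := Nat.factorial_mul_succ_multichoose 4 j
  have hB₁ := Nat.factorial_mul_succ_multichoose 3 (j + 1)
  have hB₂ := Nat.factorial_mul_succ_multichoose 3 (j + 2)
  simp only [Nat.factorial, Nat.ascFactorial_succ, Nat.ascFactorial_zero] at hA' hB₁ hB₂
  refine (Nat.div_eq_of_eq_mul_left (by norm_num) ?_).symm
  linarith
end

section
/- If u is a polynomial of degree at most k in four variables vanishing on all five facet hyperplanes of the simplex with barycentric coordinates λ1,...,λ5, then u = λ1 λ2 λ3 λ4 λ5 ψ for some polynomial ψ of degree at most k−5; moreover, if additionally the integral of u·ψ over the simplex vanishes, then u = 0. -/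
/-!
Each `λᵢ` is of total degree one, hence irreducible, and two distinct `λᵢ` are not associated
(evaluate at the vertices), so they are pairwise relatively prime in the factorial ring
`ℝ[x₁,…,x₄]`. A polynomial vanishing on `{λᵢ = 0}` is divisible by `λᵢ`: writing `λᵢ` as
`±(xⱼ - q)` with `q` free of `xⱼ`, the remainder of `u` after substituting `q` for `xⱼ` vanishes
everywhere. Hence `∏ λᵢ ∣ u`, and the degree bound follows from additivity of the total degree.
Finally `u ψ = (∏ λᵢ) ψ²` is continuous and nonnegative on the simplex, so a vanishing integral
forces `u ψ` to vanish on an open box inside it, hence `u ψ = 0` as a polynomial.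
-/

open MvPolynomial MeasureTheory

/-- Barycentric coordinates of the reference 4-simplex with vertices
`0, e₁, e₂, e₃, e₄`: the coordinate functions `x₁,…,x₄` and `1 − ∑ x_i`. -/
noncomputable def lam : Fin 5 → MvPolynomial (Fin 4) ℝ := fun i =>
  if h : (i : ℕ) < 4 then X (⟨i, h⟩ : Fin 4) else 1 - ∑ j, X j

namespace MvPolynomial

variable {σ R : Type*}

theorem X_sub_dvd_sub_aeval_update [CommRing R] [DecidableEq σ] (i : σ)
    (q p : MvPolynomial σ R) :
    X i - q ∣ p - aeval (Function.update X i q) p := by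
  induction p using MvPolynomial.induction_on with
  | C a => simp
  | add p p' hp hp' => simpa only [map_add, add_sub_add_comm] using dvd_add hp hp'
  | mul_X p j hp =>
    rw [map_mul, aeval_X]
    obtain rfl | hj := eq_or_ne j i
    · rw [Function.update_self]
      have : p * X j - aeval (Function.update X j q) p * q =
          (p - aeval (Function.update X j q) p) * X j +
            aeval (Function.update X j q) p * (X j - q) := by ring
      rw [this]
      exact dvd_add (hp.mul_right _) (dvd_mul_left _ _)
    · rw [Function.update_of_ne hj, ← sub_mul]
      exact hp.mul_right _

theorem eval_aeval [CommRing R] (x : σ → R) (f : σ → MvPolynomial σ R) (p : MvPolynomial σ R) :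
    eval x (aeval f p) = eval (fun j => eval x (f j)) p := by
  rw [aeval_eq_bind₁, eval, eval₂Hom_bind₁]
  rfl

theorem X_sub_dvd_of_eval_eq_zero [CommRing R] [DecidableEq σ] [IsDomain R] [Infinite R] {i : σ}
    {q p : MvPolynomial σ R} (hq : ∀ x a, eval (Function.update x i a) q = eval x q)
    (hp : ∀ x, x i = eval x q → eval x p = 0) : X i - q ∣ p := by
  have hsub : aeval (Function.update X i q) p = 0 := by
    refine funext fun x => ?_
    rw [eval_aeval, map_zero]
    have : (fun j => eval x (Function.update X i q j)) = Function.update x i (eval x q) := by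
      funext j
      rw [Function.apply_update (fun _ => eval x) X i q j]
      simp only [eval_X]
    rw [this]
    exact hp _ (by rw [Function.update_self, hq])
  simpa only [hsub, sub_zero] using X_sub_dvd_sub_aeval_update i q p

theorem totalDegree_prod_of_isDomain [CommRing R] [IsDomain R] {ι : Type*} (s : Finset ι)
    (f : ι → MvPolynomial σ R) (hf : ∀ i ∈ s, f i ≠ 0) :
    (∏ i ∈ s, f i).totalDegree = ∑ i ∈ s, (f i).totalDegree := by
  classical
  induction s using Finset.induction_on with
  | empty => simp
  | insert a s ha ih =>
    have hs : ∀ i ∈ s, f i ≠ 0 := fun i hi => hf i (Finset.mem_insert_of_mem hi)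
    rw [Finset.prod_insert ha, Finset.sum_insert ha,
      totalDegree_mul_of_isDomain (hf a (Finset.mem_insert_self a s))
        (Finset.prod_ne_zero_iff.mpr hs), ih hs]

theorem irreducible_of_totalDegree_eq_one_of_field {K : Type*} [Field K] {p : MvPolynomial σ K}
    (hp : p.totalDegree = 1) : Irreducible p := by
  refine irreducible_of_totalDegree_eq_one hp fun c hc => ?_
  obtain ⟨m, hm⟩ := ne_zero_iff.mp (show p ≠ 0 by rintro rfl; simp at hp)
  exact (ne_zero_of_dvd_ne_zero hm (hc m)).isUnit

end MvPolynomial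

theorem MeasureTheory.eqOn_zero_of_setIntegral_eq_zero {α : Type*} [TopologicalSpace α]
    [MeasurableSpace α] {μ : Measure α} [μ.IsOpenPosMeasure]
    {f : α → ℝ} {s U : Set α} (hs : MeasurableSet s) (hfi : IntegrableOn f s μ)
    (hnn : ∀ x ∈ s, 0 ≤ f x) (hU : IsOpen U) (hUs : U ⊆ s) (hf : ContinuousOn f U)
    (h : ∫ x in s, f x ∂μ = 0) : Set.EqOn f 0 U := by
  have hae : f =ᵐ[μ.restrict s] 0 :=
    (setIntegral_eq_zero_iff_of_nonneg_ae (ae_restrict_of_forall_mem hs hnn) hfi).mp h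
  exact Measure.eqOn_open_of_ae_eq (ae_restrict_of_ae_restrict_of_subset hUs hae) hU hf
    continuousOn_const

theorem lam_castSucc (j : Fin 4) : lam j.castSucc = X j := by
  simp [lam]

theorem lam_last : lam (Fin.last 4) = 1 - ∑ j, X j := by
  simp [lam]

def vertex (i : Fin 5) : Fin 4 → ℝ := fun j => if j.castSucc = i then 1 else 0

theorem eval_vertex_lam (i j : Fin 5) : eval (vertex i) (lam j) = if j = i then 1 else 0 := by
  fin_cases i <;> fin_cases j <;> simp [vertex, lam, Fin.sum_univ_four]

theorem totalDegree_lam (i : Fin 5) : (lam i).totalDegree = 1 := by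
  refine le_antisymm ?_ (Nat.one_le_iff_ne_zero.mpr fun h => ?_)
  · induction i using Fin.lastCases with
    | cast j => simp [lam_castSucc]
    | last =>
      rw [lam_last]
      refine (totalDegree_sub _ _).trans (max_le (by simp) ?_)
      exact (totalDegree_finsetSum _ _).trans (Finset.sup_le fun j _ => by simp)
  · have hC := totalDegree_eq_zero_iff_eq_C.mp h
    have h1 := eval_vertex_lam i i
    have h0 := eval_vertex_lam (i + 1) i
    rw [hC, eval_C] at h1 h0
    simp only [if_pos, if_neg (show i ≠ i + 1 by simp)] at h1 h0
    exact one_ne_zero (h1.symm.trans h0)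

theorem irreducible_lam (i : Fin 5) : Irreducible (lam i) :=
  irreducible_of_totalDegree_eq_one_of_field (totalDegree_lam i)

theorem lam_ne_zero (i : Fin 5) : lam i ≠ 0 :=
  (irreducible_lam i).ne_zero

theorem prod_lam_ne_zero : ∏ i, lam i ≠ 0 :=
  Finset.prod_ne_zero_iff.mpr fun i _ => lam_ne_zero i

theorem totalDegree_prod_lam : (∏ i, lam i).totalDegree = 5 := by
  rw [totalDegree_prod_of_isDomain _ _ fun i _ => lam_ne_zero i]
  simp [totalDegree_lam]

theorem pairwise_isRelPrime_lam : Pairwise (Function.onFun IsRelPrime lam) := by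
  intro i j hij
  refine (irreducible_lam i).isRelPrime_iff_not_dvd.mpr fun ⟨c, hc⟩ => ?_
  have := congrArg (eval (vertex j)) hc
  simp [eval_vertex_lam, hij] at this

theorem lam_dvd_of_eval_eq_zero {i : Fin 5} {u : MvPolynomial (Fin 4) ℝ}
    (hu : ∀ x, eval x (lam i) = 0 → eval x u = 0) : lam i ∣ u := by
  induction i using Fin.lastCases with
  | cast j =>
    simpa [lam_castSucc] using X_sub_dvd_of_eval_eq_zero (i := j) (q := 0) (by simp)
      fun x hx => hu x (by simpa [lam_castSucc] using hx)
  | last =>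
    -- `q = X 0 + lam 4` does not involve `x 0`, and `X 0 - q = -lam 4`.
    have hq : ∀ x a, eval (Function.update x 0 a) (X 0 + lam (Fin.last 4)) =
        eval x (X 0 + lam (Fin.last 4)) := by
      intro x a
      rw [lam_last]
      simp [Fin.sum_univ_four]
      ring
    have := X_sub_dvd_of_eval_eq_zero hq fun x hx => hu x (by simpa using hx)
    rwa [sub_add_cancel_left, neg_dvd] at this

def refSimplex : Set (Fin 4 → ℝ) := {x | (∀ i, 0 ≤ x i) ∧ ∑ i, x i ≤ 1}

theorem isCompact_refSimplex : IsCompact refSimplex := by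
  have hclosed : IsClosed refSimplex := (isClosed_Ici (a := (0 : Fin 4 → ℝ))).inter
    (isClosed_le (continuous_finsetSum _ fun i _ => continuous_apply i) continuous_const)
  refine (isCompact_Icc (a := (0 : Fin 4 → ℝ)) (b := 1)).of_isClosed_subset hclosed
    fun x hx => ⟨hx.1, fun i => ?_⟩
  exact (Finset.single_le_sum (fun j _ => hx.1 j) (Finset.mem_univ i)).trans hx.2

theorem pi_Ioo_subset_refSimplex : Set.univ.pi (fun _ => Set.Ioo 0 (1 / 4)) ⊆ refSimplex := by
  intro x hx
  simp only [Set.mem_univ_pi, Set.mem_Ioo] at hx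
  refine ⟨fun i => (hx i).1.le, ?_⟩
  rw [Fin.sum_univ_four]
  linarith [(hx 0).2, (hx 1).2, (hx 2).2, (hx 3).2]

theorem eval_lam_nonneg {x : Fin 4 → ℝ} (hx : x ∈ refSimplex) (i : Fin 5) :
    0 ≤ eval x (lam i) := by
  induction i using Fin.lastCases with
  | cast j => simpa [lam_castSucc] using hx.1 j
  | last =>
    rw [lam_last]
    simpa [sub_nonneg] using hx.2

theorem eq_zero_of_setIntegral_eval_mul_eq_zero {u ψ : MvPolynomial (Fin 4) ℝ}
    (hu : u = (∏ i, lam i) * ψ) (h : ∫ x in refSimplex, eval x u * eval x ψ = 0) : u = 0 := by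
  have hcont : Continuous fun x => eval x u * eval x ψ :=
    (continuous_eval u).mul (continuous_eval ψ)
  have hnn : ∀ x ∈ refSimplex, 0 ≤ eval x u * eval x ψ := fun x hx => by
    have : eval x u * eval x ψ = (∏ i, eval x (lam i)) * eval x ψ ^ 2 := by
      rw [hu, map_mul, map_prod]; ring
    rw [this]
    exact mul_nonneg (Finset.prod_nonneg fun i _ => eval_lam_nonneg hx i) (sq_nonneg _)
  have hbox := eqOn_zero_of_setIntegral_eq_zero isCompact_refSimplex.measurableSet
    (hcont.continuousOn.integrableOn_compact isCompact_refSimplex) hnn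
    (isOpen_set_pi Set.finite_univ fun _ _ => isOpen_Ioo) pi_Ioo_subset_refSimplex
    hcont.continuousOn h
  have huψ : u * ψ = 0 :=
    funext_set _ (fun _ => Set.Ioo_infinite (by norm_num : (0 : ℝ) < 1 / 4))
      fun x hx => by simpa using hbox hx
  rcases mul_eq_zero.mp huψ with hu0 | hψ0
  · exact hu0
  · rw [hu, hψ0, mul_zero]

/-- If a polynomial `u` of degree at most `k` in four variables vanishes on all
five facet hyperplanes of the simplex (zero sets of the barycentric coordinates
`λ₁,…,λ₅`), then `u = λ₁λ₂λ₃λ₄λ₅ ψ` with `deg ψ ≤ k − 5`; and if moreover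
`∫_K u·ψ = 0` over the simplex, then `u = 0`. -/
theorem bubble_factorization (k : ℕ) (u : MvPolynomial (Fin 4) ℝ)
    (hu : u.totalDegree ≤ k)
    (hvan : ∀ i : Fin 5, ∀ x : Fin 4 → ℝ, eval x (lam i) = 0 → eval x u = 0) :
    ∃ ψ : MvPolynomial (Fin 4) ℝ,
      ψ.totalDegree ≤ k - 5 ∧
      u = (∏ i, lam i) * ψ ∧
      ((∫ x in {x : Fin 4 → ℝ | (∀ i, 0 ≤ x i) ∧ (∑ i, x i) ≤ 1},
          eval x u * eval x ψ) = 0 → u = 0) := by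
  obtain ⟨ψ, hψ⟩ : (∏ i, lam i) ∣ u := Fintype.prod_dvd_of_isRelPrime pairwise_isRelPrime_lam
    fun i => lam_dvd_of_eval_eq_zero (hvan i)
  refine ⟨ψ, ?_, hψ, eq_zero_of_setIntegral_eval_mul_eq_zero hψ⟩
  rcases eq_or_ne ψ 0 with rfl | hψ0
  · simp
  · have hdeg := totalDegree_mul_of_isDomain prod_lam_ne_zero hψ0
    rw [totalDegree_prod_lam, ← hψ] at hdeg
    omega
end
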